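/- arXiv:2603.21932 — 6 statements merged into one kernel-verified Lean document; each statement's English description precedes it below -/
import Mathlib

section
/- With Λ̄ > 0, k > 0, n ≥ 2, let BR(Λ̄, n, k) denote the unique positive solution X of X = (k⁻¹ + (Λ̄⁻¹ + (n-1)X)⁻¹)⁻¹. Then BR is strictly increasing in k, strictly increasing in n (treating n as a real variable ≥ 2), and strictly decreasing in Λ̄. -/
/-- The function `X ↦ X⁻¹ - (c + m*X)⁻¹` is strictly decreasing on positives
when `c > 0` and `m ≥ 1`. -/
lemma aux_anti (c m a b : ℝ) (hc : 0 < c) (hm : 1 ≤ m) (ha : 0 < a) (hab : a < b) :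
    b⁻¹ - (c + m * b)⁻¹ < a⁻¹ - (c + m * a)⁻¹ := by
  have hb : 0 < b := ha.trans hab
  have hm0 : 0 < m := lt_of_lt_of_le one_pos hm
  have hda : 0 < c + m * a := by positivity
  have hdb : 0 < c + m * b := by positivity
  have h : b⁻¹ + (c + m * a)⁻¹ < a⁻¹ + (c + m * b)⁻¹ := by
    rw [inv_eq_one_div, inv_eq_one_div, inv_eq_one_div, inv_eq_one_div,
      div_add_div _ _ hb.ne' hda.ne', div_add_div _ _ ha.ne' hdb.ne',
      div_lt_div_iff₀ (by positivity) (by positivity)]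
    nlinarith [mul_pos (sub_pos.2 hab) (mul_pos hc hc),
      mul_pos (sub_pos.2 hab) (mul_pos (mul_pos hc hm0) ha),
      mul_pos (sub_pos.2 hab) (mul_pos (mul_pos hc hm0) hb),
      mul_nonneg (mul_nonneg (sub_pos.2 hab).le (sub_nonneg.2 hm))
        (mul_pos (mul_pos hm0 ha) hb).le]
  linarith

/-- At a fixed point, `X⁻¹ - (Λ⁻¹ + (n-1)X)⁻¹ = k⁻¹`. -/
lemma aux_fix (Λ k n X : ℝ)
    (heq : X = (k⁻¹ + (Λ⁻¹ + (n - 1) * X)⁻¹)⁻¹) :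
    X⁻¹ - (Λ⁻¹ + (n - 1) * X)⁻¹ = k⁻¹ := by
  nth_rewrite 1 [heq]
  rw [inv_inv]; ring

/-- Monotonicity of the best-reply slope `BR(Λ̄, n, k)`, characterized as the
unique positive solution of `X = (k⁻¹ + (Λ̄⁻¹ + (n-1)X)⁻¹)⁻¹`: strictly
increasing in `k`, strictly increasing in `n` (as a real variable ≥ 2), and
strictly decreasing in `Λ̄`. -/
theorem stmt_3 (Λ Λ' k k' n n' X X' : ℝ)
    (hΛ : 0 < Λ) (hΛ' : 0 < Λ') (hk : 0 < k) (hk' : 0 < k')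
    (hn : 2 ≤ n) (hn' : 2 ≤ n')
    (hX : 0 < X) (hX' : 0 < X')
    (heq : X = (k⁻¹ + (Λ⁻¹ + (n - 1) * X)⁻¹)⁻¹)
    (heq' : X' = (k'⁻¹ + (Λ'⁻¹ + (n' - 1) * X')⁻¹)⁻¹) :
    (Λ' = Λ → n' = n → k < k' → X < X') ∧
    (Λ' = Λ → k' = k → n < n' → X < X') ∧
    (n' = n → k' = k → Λ < Λ' → X' < X) := by
  have hg := aux_fix Λ k n X heq
  have hg' := aux_fix Λ' k' n' X' heq'
  have hΛi : 0 < Λ⁻¹ := by positivity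
  have hΛi' : 0 < Λ'⁻¹ := by positivity
  have hm : (1:ℝ) ≤ n - 1 := by linarith
  have hm' : (1:ℝ) ≤ n' - 1 := by linarith
  refine ⟨?_, ?_, ?_⟩
  · rintro rfl rfl hkk
    by_contra h
    push_neg at h
    rcases eq_or_lt_of_le h with h | h
    · rw [h] at hg'
      have : k⁻¹ = k'⁻¹ := hg ▸ hg'
      have := inv_strictAnti₀ hk hkk
      linarith
    · have := aux_anti Λ'⁻¹ (n' - 1) X' X hΛi' hm' hX' h
      have := inv_strictAnti₀ hk hkk
      linarith
  · rintro rfl rfl hnn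
    -- g(Λ, n', X) > g(Λ, n, X) = k⁻¹ = g(Λ, n', X')
    have hmono : (Λ'⁻¹ + (n' - 1) * X)⁻¹ < (Λ'⁻¹ + (n - 1) * X)⁻¹ := by
      apply inv_strictAnti₀ (by positivity)
      have : (n - 1) * X < (n' - 1) * X := by
        apply mul_lt_mul_of_pos_right (by linarith) hX
      linarith
    by_contra h
    push_neg at h
    rcases eq_or_lt_of_le h with h | h
    · rw [h] at hg'; linarith
    · have := aux_anti Λ'⁻¹ (n' - 1) X' X hΛi' hm' hX' h
      linarith
  · rintro rfl rfl hΛΛ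
    -- g(Λ', n', X) < g(Λ, n', X) = k'⁻¹ = g(Λ', n', X')
    have hmono : (Λ⁻¹ + (n' - 1) * X)⁻¹ < (Λ'⁻¹ + (n' - 1) * X)⁻¹ := by
      apply inv_strictAnti₀ (by positivity)
      have := inv_strictAnti₀ hΛ hΛΛ
      linarith
    by_contra h
    push_neg at h
    rcases eq_or_lt_of_le h with h | h
    · rw [h] at hg hmono; linarith
    · have := aux_anti Λ'⁻¹ (n' - 1) X X' hΛi' hm' hX h
      linarith
end

section
/- Let M be an m×m symmetric positive definite matrix of the form M = Σⱼ bⱼ vⱼ vⱼ' + C with bⱼ > 0, C symmetric positive semidefinite and nonzero on the range of M⁻¹vⱼ for each j. Then for every j: Σ_{i≠j} 2·bⱼ·bᵢ·(vᵢ' M⁻¹ vⱼ)² < 2·bⱼ·vⱼ' M⁻¹ vⱼ - 2·bⱼ²·(vⱼ' M⁻¹ vⱼ)². -/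
open Matrix Finset

private lemma sum_mulVec' {ι m' : Type*} [Fintype m'] (s : Finset ι)
    (A : ι → Matrix m' m' ℝ) (w : m' → ℝ) :
    (∑ i ∈ s, A i) *ᵥ w = ∑ i ∈ s, A i *ᵥ w := by
  ext k
  simp [Matrix.mulVec, dotProduct, Matrix.sum_apply, Finset.sum_apply, Finset.sum_mul]
  rw [Finset.sum_comm]

private lemma dotProduct_sum' {ι m' : Type*} [Fintype m'] (s : Finset ι)
    (w : m' → ℝ) (f : ι → (m' → ℝ)) :
    w ⬝ᵥ (∑ i ∈ s, f i) = ∑ i ∈ s, w ⬝ᵥ f i := by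
  simp [dotProduct, Finset.sum_apply, Finset.mul_sum]
  rw [Finset.sum_comm]

/-- Diagonal-dominance computation in the uniqueness proof: for
`M = Σⱼ bⱼ vⱼvⱼ' + C` positive definite with `vⱼ'M⁻¹CM⁻¹vⱼ > 0`, the
off-diagonal sums of the Hessian are strictly dominated. -/
theorem stmt_7 {N m : ℕ} (v : Fin N → (Fin m → ℝ)) (b : Fin N → ℝ)
    (C M : Matrix (Fin m) (Fin m) ℝ)
    (hM : M = ∑ j, b j • Matrix.vecMulVec (v j) (v j) + C)
    (hMpd : M.PosDef) (hb : ∀ j, 0 < b j) (hC : C.PosSemidef)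
    (hCpos : ∀ j, 0 < (M⁻¹ *ᵥ v j) ⬝ᵥ (C *ᵥ (M⁻¹ *ᵥ v j))) :
    ∀ j : Fin N,
      ∑ i ∈ Finset.univ.erase j,
          2 * b j * b i * (v i ⬝ᵥ (M⁻¹ *ᵥ v j)) ^ 2
        < 2 * b j * (v j ⬝ᵥ (M⁻¹ *ᵥ v j))
          - 2 * (b j) ^ 2 * (v j ⬝ᵥ (M⁻¹ *ᵥ v j)) ^ 2 := by
  intro j
  set w : Fin m → ℝ := M⁻¹ *ᵥ v j with hw
  have hdet : IsUnit M.det := isUnit_iff_ne_zero.mpr hMpd.det_pos.ne'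
  have hMw : M *ᵥ w = v j := by
    rw [hw, Matrix.mulVec_mulVec, Matrix.mul_nonsing_inv M hdet, Matrix.one_mulVec]
  -- each rank-one term
  have hterm : ∀ i, w ⬝ᵥ ((b i • Matrix.vecMulVec (v i) (v i)) *ᵥ w)
      = b i * (v i ⬝ᵥ w) ^ 2 := by
    intro i
    simp only [Matrix.smul_mulVec, dotProduct_smul, smul_eq_mul]
    congr 1
    have : Matrix.vecMulVec (v i) (v i) *ᵥ w = (v i ⬝ᵥ w) • v i := by
      ext k
      simp [Matrix.vecMulVec, Matrix.mulVec, dotProduct, Finset.mul_sum,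
        mul_comm, mul_left_comm, mul_assoc]
    rw [this, dotProduct_smul, smul_eq_mul, dotProduct_comm, sq]
  have hsum : ∑ i, b i * (v i ⬝ᵥ w) ^ 2
      = v j ⬝ᵥ w - w ⬝ᵥ (C *ᵥ w) := by
    have h1 : w ⬝ᵥ (M *ᵥ w) = v j ⬝ᵥ w := by
      rw [hMw, dotProduct_comm]
    have h2 : w ⬝ᵥ (M *ᵥ w)
        = (∑ i, b i * (v i ⬝ᵥ w) ^ 2) + w ⬝ᵥ (C *ᵥ w) := by
      conv_lhs => rw [hM]
      rw [Matrix.add_mulVec, dotProduct_add]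
      congr 1
      rw [sum_mulVec', dotProduct_sum']
      exact Finset.sum_congr rfl fun i _ => hterm i
    linarith [h1, h2]
  have hsplit : ∑ i, b i * (v i ⬝ᵥ w) ^ 2
      = b j * (v j ⬝ᵥ w) ^ 2 + ∑ i ∈ Finset.univ.erase j, b i * (v i ⬝ᵥ w) ^ 2 := by
    rw [← Finset.add_sum_erase _ _ (Finset.mem_univ j)]
  have hS : ∑ i ∈ Finset.univ.erase j, b i * (v i ⬝ᵥ w) ^ 2
      = v j ⬝ᵥ w - w ⬝ᵥ (C *ᵥ w) - b j * (v j ⬝ᵥ w) ^ 2 := by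
    linarith [hsum, hsplit]
  have hmul : ∑ i ∈ Finset.univ.erase j, 2 * b j * b i * (v i ⬝ᵥ w) ^ 2
      = 2 * b j * ∑ i ∈ Finset.univ.erase j, b i * (v i ⬝ᵥ w) ^ 2 := by
    rw [Finset.mul_sum]
    exact Finset.sum_congr rfl fun i _ => by ring
  rw [hmul, hS]
  have hbj := hb j
  have hc := hCpos j
  nlinarith [hbj, hc]
end

section
/- In the two-firm vertical economy, the system B_U = 1 + (1/B_D + 1)⁻¹ and B_D = (1 + 1/(B_U + 1))⁻¹ with B_U, B_D > 0 has the unique positive solution B_D = 1/√2 and B_U = √2. -/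
/-- Equilibrium equations of the SDFE in the two-firm vertical economy:
`B_U = 1 + (1/B_D + 1)⁻¹`, `B_D = (1 + 1/(B_U + 1))⁻¹` has the unique
positive solution `B_D = 1/√2`, `B_U = √2`. -/
theorem stmt_8 :
    (0 < Real.sqrt 2 ∧ 0 < 1 / Real.sqrt 2 ∧
      Real.sqrt 2 = 1 + (1 / (1 / Real.sqrt 2) + 1)⁻¹ ∧
      1 / Real.sqrt 2 = (1 + 1 / (Real.sqrt 2 + 1))⁻¹) ∧
    ∀ BU BD : ℝ, 0 < BU → 0 < BD →
      BU = 1 + (1 / BD + 1)⁻¹ →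
      BD = (1 + 1 / (BU + 1))⁻¹ →
      BU = Real.sqrt 2 ∧ BD = 1 / Real.sqrt 2 := by
  have hs : (0:ℝ) < Real.sqrt 2 := Real.sqrt_pos.mpr (by norm_num)
  have hs2 : Real.sqrt 2 ^ 2 = 2 := Real.sq_sqrt (by norm_num)
  constructor
  · refine ⟨hs, by positivity, ?_, ?_⟩
    · field_simp
      nlinarith [hs, hs2]
    · field_simp
      nlinarith [hs, hs2]
  · intro BU BD hU hD h1 h2
    have hBD1 : (0:ℝ) < 1/BD + 1 := by positivity
    have hBU1 : (0:ℝ) < 1 + 1/(BU+1) := by positivity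
    have e1 : BU * (BD + 1) = 2*BD + 1 := by
      rw [h1]; field_simp; ring
    have hne : BU + 1 ≠ 0 := by positivity
    have e2 : BD * (BU + 2) = BU + 1 := by
      have h2' := h2
      field_simp at h2'
      nlinarith [h2']
    have hBU2 : BU ^ 2 = 2 := by nlinarith
    have hBUs : BU = Real.sqrt 2 := by
      nlinarith [hs, hs2, sq_nonneg (BU - Real.sqrt 2)]
    refine ⟨hBUs, ?_⟩
    rw [hBUs] at e2
    have : BD * (Real.sqrt 2 + 2) = Real.sqrt 2 + 1 := e2
    rw [eq_div_iff (ne_of_gt hs)]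
    nlinarith [hs, hs2]
end

section
/- Let BR, BR' : K → K be continuous monotone increasing maps on K = ∏ᵢ[0,kᵢ] ⊂ ℝⁿ with BR(x) > BR'(x) coordinatewise for all x. Let x* be a fixed point of BR that is minimal among fixed points of BR, and let y* be the unique fixed point of BR'. Then x* > y* coordinatewise. -/
open Set

/-- Abstract comparison of equilibria: if `BR` strictly dominates `BR'`
coordinatewise, `x*` is a minimal fixed point of `BR` and `y*` is the unique
fixed point of `BR'`, then `x* > y*` coordinatewise. -/
theorem stmt_13 {ι : Type*} [Fintype ι] (k : ι → ℝ) (hk : 0 ≤ k)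
    (BR BR' : (ι → ℝ) → (ι → ℝ))
    (hmaps : ∀ x ∈ Set.Icc (0 : ι → ℝ) k, BR x ∈ Set.Icc (0 : ι → ℝ) k)
    (hmaps' : ∀ x ∈ Set.Icc (0 : ι → ℝ) k, BR' x ∈ Set.Icc (0 : ι → ℝ) k)
    (hcont : ContinuousOn BR (Set.Icc (0 : ι → ℝ) k))
    (hcont' : ContinuousOn BR' (Set.Icc (0 : ι → ℝ) k))
    (hmono : ∀ x ∈ Set.Icc (0 : ι → ℝ) k, ∀ y ∈ Set.Icc (0 : ι → ℝ) k,
      x ≤ y → BR x ≤ BR y)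
    (hmono' : ∀ x ∈ Set.Icc (0 : ι → ℝ) k, ∀ y ∈ Set.Icc (0 : ι → ℝ) k,
      x ≤ y → BR' x ≤ BR' y)
    (hdom : ∀ x ∈ Set.Icc (0 : ι → ℝ) k, ∀ i, BR' x i < BR x i)
    (xstar ystar : ι → ℝ)
    (hx : xstar ∈ Set.Icc (0 : ι → ℝ) k) (hxfix : BR xstar = xstar)
    (hxmin : ∀ x ∈ Set.Icc (0 : ι → ℝ) k, BR x = x → xstar ≤ x)
    (hy : ystar ∈ Set.Icc (0 : ι → ℝ) k) (hyfix : BR' ystar = ystar)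
    (hyuniq : ∀ y ∈ Set.Icc (0 : ι → ℝ) k, BR' y = y → y = ystar) :
    ∀ i, ystar i < xstar i := by
  set K := Set.Icc (0 : ι → ℝ) k with hK
  set z : ℕ → (ι → ℝ) := fun n => BR'^[n] xstar with hz
  have hzsucc : ∀ n, z (n + 1) = BR' (z n) := by
    intro n; simp [hz, Function.iterate_succ_apply']
  have hzK : ∀ n, z n ∈ K := by
    intro n; induction n with
    | zero => simpa [hz] using hx
    | succ n ih => rw [hzsucc]; exact hmaps' _ ih
  have hstep1 : z 1 ≤ z 0 := by
    intro i
    have := hdom xstar hx i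
    rw [hxfix] at this
    simpa [hz, hzsucc] using this.le
  have hdec : ∀ n, z (n + 1) ≤ z n := by
    intro n; induction n with
    | zero => exact hstep1
    | succ n ih =>
      have h := hmono' _ (hzK (n + 1)) _ (hzK n) ih
      rw [← hzsucc n] at h
      rw [hzsucc (n + 1)]
      exact h
  have hanti : Antitone z := antitone_nat_of_succ_le hdec
  have hantI : ∀ i, Antitone fun n => z n i := fun i a b hab => hanti hab i
  have hbdd : ∀ i, BddBelow (Set.range fun n => z n i) := by
    intro i
    exact ⟨0, by rintro _ ⟨n, rfl⟩; exact (hzK n).1 i⟩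
  set L : ι → ℝ := fun i => ⨅ n, z n i with hL
  have htendI : ∀ i, Filter.Tendsto (fun n => z n i) Filter.atTop (nhds (L i)) :=
    fun i => tendsto_atTop_ciInf (hantI i) (hbdd i)
  have htend : Filter.Tendsto z Filter.atTop (nhds L) :=
    tendsto_pi_nhds.mpr htendI
  have hLle : ∀ n, L ≤ z n := by
    intro n i; exact ciInf_le (hbdd i) n
  have hLK : L ∈ K := by
    constructor
    · intro i
      exact le_ciInf fun n => (hzK n).1 i
    · intro i
      exact le_trans (hLle 0 i) ((hzK 0).2 i)
  have htend' : Filter.Tendsto z Filter.atTop (nhdsWithin L K) := by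
    refine tendsto_nhdsWithin_of_tendsto_nhds_of_eventually_within _ htend ?_
    exact Filter.Eventually.of_forall hzK
  have hBRtend : Filter.Tendsto (fun n => BR' (z n)) Filter.atTop (nhds (BR' L)) :=
    (hcont' L hLK).tendsto.comp htend'
  have hshift : Filter.Tendsto (fun n => z (n + 1)) Filter.atTop (nhds L) :=
    htend.comp (Filter.tendsto_add_atTop_nat 1)
  have hfixL : BR' L = L := by
    have : Filter.Tendsto (fun n => BR' (z n)) Filter.atTop (nhds L) := by
      simpa [hzsucc] using hshift
    exact tendsto_nhds_unique hBRtend this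
  have hLy : L = ystar := hyuniq L hLK hfixL
  intro i
  have h1 : ystar i ≤ z 1 i := by rw [← hLy]; exact hLle 1 i
  have h2 : z 1 i < xstar i := by
    have := hdom xstar hx i
    rw [hxfix] at this
    simpa [hz, hzsucc] using this
  exact lt_of_le_of_lt h1 h2
end

section
/- Fix k > 0 and an integer n* ≥ 2, and for each N ≥ 2 let B*(N) be the common equilibrium slope of the homogeneous N-layer supply chain, i.e. the unique positive solution of B = (1/k + 1/((n*-1)B + ((N-1)/(n* B) + 1/B_c)⁻¹))⁻¹. Then: (a) if n* ≥ 3, B*(N) → k·(n*-2)/(n*-1) as N → ∞; (b) if n* = 2, B*(N) → 0 as N → ∞. -/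
open Filter

/-- Limit of the homogeneous supply-chain equilibrium slope as the number of
layers grows: `B*(N) → k(n*-2)/(n*-1)` if `n* ≥ 3`, and `B*(N) → 0` if
`n* = 2`. -/
theorem stmt_15 (k Bc : ℝ) (hk : 0 < k) (hBc : 0 < Bc)
    (n : ℕ) (hn : 2 ≤ n) (B : ℕ → ℝ)
    (hB : ∀ N : ℕ, 2 ≤ N → 0 < B N ∧
      B N = (1 / k + 1 / (((n : ℝ) - 1) * B N
        + (((N : ℝ) - 1) / ((n : ℝ) * B N) + 1 / Bc)⁻¹))⁻¹) :
    (3 ≤ n →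
      Filter.Tendsto B Filter.atTop
        (nhds (k * ((n : ℝ) - 2) / ((n : ℝ) - 1)))) ∧
    (n = 2 → Filter.Tendsto B Filter.atTop (nhds 0)) := by
  have hn2 : (2:ℝ) ≤ (n:ℝ) := by exact_mod_cast hn
  have hn1 : (0:ℝ) < (n:ℝ) - 1 := by linarith
  have hn0 : (0:ℝ) < (n:ℝ) := by linarith
  set L : ℝ := k * ((n:ℝ) - 2) / ((n:ℝ) - 1) with hLdef
  have key : ∀ N : ℕ, 2 ≤ N →
      L ≤ B N ∧ B N ≤ L + ((n:ℝ)*k) * (((n:ℝ)-1)*((N:ℝ)-1))⁻¹ := by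
    intro N hN
    obtain ⟨hBpos, heq⟩ := hB N hN
    have hN1 : (0:ℝ) < (N:ℝ) - 1 := by
      have : (2:ℝ) ≤ (N:ℝ) := by exact_mod_cast hN
      linarith
    set Λ : ℝ := (((N:ℝ) - 1) / ((n:ℝ) * B N) + 1 / Bc)⁻¹ with hΛdef
    have hq : 0 < ((N:ℝ) - 1) / ((n:ℝ) * B N) := div_pos hN1 (mul_pos hn0 hBpos)
    have hD : 0 < ((N:ℝ) - 1) / ((n:ℝ) * B N) + 1 / Bc := by
      have : 0 < 1 / Bc := by positivity
      linarith
    have hΛpos : 0 < Λ := inv_pos.mpr hD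
    have hΛle : Λ ≤ (n:ℝ) * B N / ((N:ℝ) - 1) := by
      have h' : Λ ≤ (((N:ℝ) - 1) / ((n:ℝ) * B N))⁻¹ := by
        rw [hΛdef]
        apply inv_anti₀ hq
        have : 0 < 1 / Bc := by positivity
        linarith
      rwa [inv_div] at h'
    have hS : 0 < ((n:ℝ)-1) * B N + Λ := by
      have := mul_pos hn1 hBpos
      linarith
    have h1 : 1 / (B N) = 1 / k + 1 / (((n:ℝ)-1) * B N + Λ) := by
      conv_lhs => rw [heq]
      rw [one_div, inv_inv]
    have hBk : B N < k := by
      have hp : 0 < 1 / (((n:ℝ)-1) * B N + Λ) := by positivity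
      have h2 : 1 / k < 1 / (B N) := by rw [h1]; linarith
      have := (div_lt_div_iff₀ hk hBpos).mp h2
      linarith
    have hpoly : ((n:ℝ)-1) * (B N)^2 + B N * Λ + k * B N
        = ((n:ℝ)-1) * k * B N + k * Λ := by
      field_simp at h1
      linear_combination -h1
    -- lower bound
    have hlow : L ≤ B N := by
      rw [hLdef, div_le_iff₀ hn1]
      nlinarith [mul_pos hBpos hΛpos, mul_nonneg (sub_pos.mpr hBk).le hΛpos.le]
    refine ⟨hlow, ?_⟩
    -- upper bound
    have hmulpos : 0 < ((n:ℝ)-1) * ((N:ℝ)-1) := mul_pos hn1 hN1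
    have hub : B N * (((n:ℝ)-1) * ((N:ℝ)-1)) ≤ k*((n:ℝ)-2)*((N:ℝ)-1) + (n:ℝ)*k := by
      have hΛle' : Λ * ((N:ℝ)-1) ≤ (n:ℝ) * B N := by
        rw [div_eq_mul_inv] at hΛle
        calc Λ * ((N:ℝ)-1) ≤ ((n:ℝ) * B N * ((N:ℝ)-1)⁻¹) * ((N:ℝ)-1) := by
              exact mul_le_mul_of_nonneg_right hΛle hN1.le
          _ = (n:ℝ) * B N := by field_simp
      have h3 : (((n:ℝ)-1)*(B N)^2 + B N*Λ + k*B N) * ((N:ℝ)-1)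
          = (((n:ℝ)-1)*k*B N + k*Λ) * ((N:ℝ)-1) := by rw [hpoly]
      nlinarith [mul_le_mul_of_nonneg_left hΛle' hk.le,
        mul_nonneg hBpos.le (mul_pos hΛpos hN1).le, hBpos, mul_pos hBpos hN1,
        mul_nonneg (sub_pos.mpr hBk).le
          (by linarith : (0:ℝ) ≤ (n:ℝ) * B N - Λ * ((N:ℝ)-1))]
    have hrhs : L + ((n:ℝ)*k) * (((n:ℝ)-1)*((N:ℝ)-1))⁻¹
        = (k*((n:ℝ)-2)*((N:ℝ)-1) + (n:ℝ)*k) / (((n:ℝ)-1)*((N:ℝ)-1)) := by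
      rw [hLdef]
      field_simp
    rw [hrhs, le_div_iff₀ hmulpos]
    exact hub
  -- limits
  have hlim : Tendsto (fun N : ℕ => L + ((n:ℝ)*k) * (((n:ℝ)-1)*((N:ℝ)-1))⁻¹)
      atTop (nhds L) := by
    have hinf : Tendsto (fun N : ℕ => ((n:ℝ)-1)*((N:ℝ)-1)) atTop atTop := by
      apply Tendsto.const_mul_atTop hn1
      exact tendsto_atTop_add_const_right atTop (-1) tendsto_natCast_atTop_atTop
    have h0 : Tendsto (fun N : ℕ => (((n:ℝ)-1)*((N:ℝ)-1))⁻¹) atTop (nhds 0) :=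
      hinf.inv_tendsto_atTop
    have := (h0.const_mul ((n:ℝ)*k)).const_add L
    simpa using this
  have hT : Tendsto B atTop (nhds L) := by
    have hlo : ∀ᶠ N in atTop, L ≤ B N := by
      filter_upwards [eventually_ge_atTop 2] with N hN using (key N hN).1
    have hhi : ∀ᶠ N in atTop, B N ≤ L + ((n:ℝ)*k) * (((n:ℝ)-1)*((N:ℝ)-1))⁻¹ := by
      filter_upwards [eventually_ge_atTop 2] with N hN using (key N hN).2
    exact tendsto_of_tendsto_of_tendsto_of_le_of_le'
      (tendsto_const_nhds (α := ℕ) (f := atTop) (x := L)) hlim hlo hhi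
  constructor
  · intro _; exact hT
  · intro h2
    rw [hLdef, h2] at hT
    norm_num at hT
    exact hT
end

section
/- Let E be a measurable space with a probability measure F whose support is all of E, let 𝓕 be a set of measurable functions f : E → ℝⁿ, and let g : ℝⁿ × E → ℝ be measurable with all relevant integrals finite. Suppose that any f** with f**(ε) ∈ argmax_{y ∈ 𝓕(E)} g(y, ε) for all ε belongs to 𝓕 (where 𝓕(E) is the union of ranges of members of 𝓕). Then: (1) any maximizer f* of f ↦ ∫ g(f(ε), ε) dF(ε) over 𝓕 satisfies g(f*(ε), ε) = max_{y ∈ 𝓕(E)} g(y, ε) for F-almost every ε; (2) any pointwise maximizer f** maximizes the integral functional over 𝓕; and if the pointwise maximizer is unique for every ε, the integral maximizer is F-a.e. unique. -/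
open MeasureTheory

/-- Klemperer–Meyer ex-post selection: under full support, ex-ante
optimization over schedules is equivalent to pointwise ex-post optimization.
(1) Any maximizer of the integral functional over the feasible set `𝓕`
pointwise maximizes `g(·, ε)` over the union `R` of ranges, `F`-a.e.;
(2) any pointwise maximizer maximizes the integral functional; and if the
pointwise maximizer is unique for every `ε`, any two integral maximizers
agree `F`-a.e. -/
theorem stmt_18 {E : Type*} [MeasurableSpace E] {n : ℕ}
    (F : Measure E) [IsProbabilityMeasure F]
    (hsupp : ∀ s : Set E, MeasurableSet s → s.Nonempty → 0 < F s)
    (𝓕 : Set (E → (Fin n → ℝ)))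
    (g : (Fin n → ℝ) → E → ℝ)
    (hmeas : ∀ f ∈ 𝓕, Measurable f)
    (hint : ∀ f ∈ 𝓕, Integrable (fun ε => g (f ε) ε) F)
    (R : Set (Fin n → ℝ)) (hR : R = ⋃ f ∈ 𝓕, Set.range f)
    (hclosed : ∀ f : E → (Fin n → ℝ),
      (∀ ε, f ε ∈ R ∧ ∀ y ∈ R, g y ε ≤ g (f ε) ε) → f ∈ 𝓕)
    (hexists : ∃ fpt : E → (Fin n → ℝ),
      ∀ ε, fpt ε ∈ R ∧ ∀ y ∈ R, g y ε ≤ g (fpt ε) ε) :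
    (∀ fstar ∈ 𝓕,
      (∀ f ∈ 𝓕, ∫ ε, g (f ε) ε ∂F ≤ ∫ ε, g (fstar ε) ε ∂F) →
      ∀ᵐ ε ∂F, ∀ y ∈ R, g y ε ≤ g (fstar ε) ε) ∧
    (∀ fpt : E → (Fin n → ℝ),
      (∀ ε, fpt ε ∈ R ∧ ∀ y ∈ R, g y ε ≤ g (fpt ε) ε) →
      ∀ f ∈ 𝓕, ∫ ε, g (f ε) ε ∂F ≤ ∫ ε, g (fpt ε) ε ∂F) ∧
    ((∀ ε, ∃! y, y ∈ R ∧ ∀ z ∈ R, g z ε ≤ g y ε) →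
      ∀ f₁ ∈ 𝓕, ∀ f₂ ∈ 𝓕,
        (∀ f ∈ 𝓕, ∫ ε, g (f ε) ε ∂F ≤ ∫ ε, g (f₁ ε) ε ∂F) →
        (∀ f ∈ 𝓕, ∫ ε, g (f ε) ε ∂F ≤ ∫ ε, g (f₂ ε) ε ∂F) →
        f₁ =ᵐ[F] f₂) := by
  -- membership of values in R
  have hmemR : ∀ f ∈ 𝓕, ∀ ε, f ε ∈ R := by
    intro f hf ε
    rw [hR]
    exact Set.mem_biUnion hf ⟨ε, rfl⟩
  obtain ⟨f₀, hf₀⟩ := hexists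
  have hf₀𝓕 : f₀ ∈ 𝓕 := hclosed f₀ hf₀
  -- part 2
  have part2 : ∀ fpt : E → (Fin n → ℝ),
      (∀ ε, fpt ε ∈ R ∧ ∀ y ∈ R, g y ε ≤ g (fpt ε) ε) →
      ∀ f ∈ 𝓕, ∫ ε, g (f ε) ε ∂F ≤ ∫ ε, g (fpt ε) ε ∂F := by
    intro fpt hfpt f hf
    have hfpt𝓕 : fpt ∈ 𝓕 := hclosed fpt hfpt
    exact integral_mono (hint f hf) (hint fpt hfpt𝓕)
      (fun ε => (hfpt ε).2 _ (hmemR f hf ε))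
  -- part 1
  have part1 : ∀ fstar ∈ 𝓕,
      (∀ f ∈ 𝓕, ∫ ε, g (f ε) ε ∂F ≤ ∫ ε, g (fstar ε) ε ∂F) →
      ∀ᵐ ε ∂F, ∀ y ∈ R, g y ε ≤ g (fstar ε) ε := by
    intro fstar hfs hmax
    have h1 : Integrable (fun ε => g (f₀ ε) ε - g (fstar ε) ε) F :=
      (hint f₀ hf₀𝓕).sub (hint fstar hfs)
    have hnn : ∀ ε, 0 ≤ g (f₀ ε) ε - g (fstar ε) ε := fun ε =>
      sub_nonneg.2 ((hf₀ ε).2 _ (hmemR fstar hfs ε))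
    have hintle : ∫ ε, (g (f₀ ε) ε - g (fstar ε) ε) ∂F = 0 := by
      have := hmax f₀ hf₀𝓕
      rw [integral_sub (hint f₀ hf₀𝓕) (hint fstar hfs)]
      have h2 := part2 f₀ hf₀ fstar hfs
      linarith
    have hae : (fun ε => g (f₀ ε) ε - g (fstar ε) ε) =ᵐ[F] 0 :=
      (integral_eq_zero_iff_of_nonneg hnn h1).mp hintle
    filter_upwards [hae] with ε hε y hy
    have : g (f₀ ε) ε = g (fstar ε) ε := by
      have := sub_eq_zero.mp hε
      linarith [sub_eq_zero.mp (hε : g (f₀ ε) ε - g (fstar ε) ε = 0)]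
    calc g y ε ≤ g (f₀ ε) ε := (hf₀ ε).2 y hy
      _ = g (fstar ε) ε := this
  refine ⟨part1, part2, ?_⟩
  -- part 3
  intro huniq f₁ hf₁ f₂ hf₂ hm₁ hm₂
  have h1 := part1 f₁ hf₁ hm₁
  have h2 := part1 f₂ hf₂ hm₂
  filter_upwards [h1, h2] with ε hε₁ hε₂
  obtain ⟨y, hy, hyu⟩ := huniq ε
  have e1 : f₁ ε = y := hyu _ ⟨hmemR f₁ hf₁ ε, hε₁⟩
  have e2 : f₂ ε = y := hyu _ ⟨hmemR f₂ hf₂ ε, hε₂⟩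
  rw [e1, e2]
end
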